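/- Let Z and W be measurable spaces, let P_Z be a probability measure on Z, and let n > m ≥ 1. Let P_{D,D_e} be the joint distribution of (D, D_e) where D = (Z_1,…,Z_n) ~ P_Z^{⊗n} and D_e is a uniformly selected size-m sub-tuple of D; write D_r = D ∖ D_e for the remaining (n−m)-tuple. Let ℓ : W × Z → [0,∞) be measurable, with population loss L(w) = ∫ ℓ(w,z) P_Z(dz) and empirical loss L̂(w|D_r) = (1/(n−m)) Σ_{z ∈ D_r} ℓ(w,z). Let P_{W|D} : Z^n → P(W) be a Markov kernel (the learning algorithm), let P̃ : W → P(W) be a Markov kernel (an arbitrary reference 'noise' mapping), and define the data-dependent prior Q(D,D_e)(B) = ∫ P̃(w_l)(B) P_{W|D}(D_r)(dw_l). Let κ : W × Z^m → P(W) be a Markov kernel (the scrubbing function), and let ρ̄(D,D_e,κ)(B) = ∫ κ(w_l,D_e)(B) P_{W|D}(D)(dw_l) denote the marginal unlearned distribution. Let β > 0 and set ξ_FL = ∫∫ exp( β(L(w) − L̂(w|D_r)) ) Q(D,D_e)(dw) P_{D,D_e}(d(D,D_e)), assumed finite. Then for every δ ∈ (0,1), with P_{D,D_e}-probability at least 1−δ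 over the draw of (D, D_e), the following holds simultaneously for every scrubbing kernel κ (with ρ̄(D,D_e,κ) ≪ Q(D,D_e), finite KL, and the relevant integrability): ∫∫ L(w) κ(w_l,D_e)(dw) P_{W|D}(D)(dw_l) ≤ ∫∫ L̂(w|D_r) κ(w_l,D_e)(dw) P_{W|D}(D)(dw_l) + (1/β)·KL( ρ̄(D,D_e,κ) ‖ Q(D,D_e) ) + (1/β)·log(ξ_FL/δ). -/

import Mathlib

open MeasureTheory ProbabilityTheory
open scoped ENNReal

/-- The sub-tuple `D_e` of the data tuple `D` selected by the strictly monotone index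
map `ι : Fin m → Fin n`. -/
def subTuple {Z : Type*} {n m : ℕ} (D : Fin n → Z)
    (ι : {f : Fin m → Fin n // StrictMono f}) : Fin m → Z :=
  fun j => D (ι.1 j)

/-- The remaining `(n−m)`-tuple `D_r = D ∖ D_e`: the entries of `D` whose index is not
selected by `ι`, in increasing order of index. -/
noncomputable def remainingTuple {Z : Type*} {n m : ℕ} (D : Fin n → Z)
    (ι : {f : Fin m → Fin n // StrictMono f}) : Fin (n - m) → Z :=
  fun j => D (((Finset.univ.image ι.1)ᶜ).orderEmbOfFin (by
    simp [Finset.card_compl, Finset.card_image_of_injective _ ι.2.injective]) j)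

lemma measurable_sigmaMk' {ι : Type*} {β : ι → Type*} [m : ∀ i, MeasurableSpace (β i)] (i : ι) :
    Measurable (@Sigma.mk ι β i) :=
  fun _s hs => iInf_le (fun a => (m a).map (Sigma.mk a)) i _ hs

lemma jensen_exp_lintegral {α : Type*} [MeasurableSpace α] {μ : Measure α}
    [IsProbabilityMeasure μ] {f : α → ℝ} (hf : Integrable f μ) :
    ENNReal.ofReal (Real.exp (∫ x, f x ∂μ)) ≤ ∫⁻ x, ENNReal.ofReal (Real.exp (f x)) ∂μ := by
  by_cases hfin : ∫⁻ x, ENNReal.ofReal (Real.exp (f x)) ∂μ = ⊤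
  · simp [hfin]
  · have hm : AEStronglyMeasurable (fun x => Real.exp (f x)) μ :=
      Real.continuous_exp.comp_aestronglyMeasurable hf.1
    have hint : Integrable (fun x => Real.exp (f x)) μ := by
      refine ⟨hm, ?_⟩
      rw [hasFiniteIntegral_iff_ofReal (Filter.Eventually.of_forall fun x => (Real.exp_pos _).le)]
      exact lt_top_iff_ne_top.2 hfin
    have hj : Real.exp (∫ x, f x ∂μ) ≤ ∫ x, Real.exp (f x) ∂μ :=
      convexOn_exp.map_integral_le Real.continuous_exp.continuousOn isClosed_univ
        (Filter.Eventually.of_forall fun x => Set.mem_univ _) hf hint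
    calc ENNReal.ofReal (Real.exp (∫ x, f x ∂μ)) ≤ ENNReal.ofReal (∫ x, Real.exp (f x) ∂μ) :=
          ENNReal.ofReal_le_ofReal hj
      _ = ∫⁻ x, ENNReal.ofReal (Real.exp (f x)) ∂μ :=
          ofReal_integral_eq_lintegral_ofReal hint
            (Filter.Eventually.of_forall fun x => (Real.exp_pos _).le)

lemma integral_llr_nonneg' {α : Type*} [MeasurableSpace α] {ρ ν : Measure α}
    [IsProbabilityMeasure ρ] [IsProbabilityMeasure ν]
    (h : ρ ≪ ν) (hint : Integrable (llr ρ ν) ρ) : 0 ≤ ∫ x, llr ρ ν x ∂ρ := by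
  have hint' : Integrable (fun x => -llr ρ ν x) ρ := hint.neg
  have h1 := jensen_exp_lintegral (μ := ρ) hint'
  have h2 : ∫⁻ x, ENNReal.ofReal (Real.exp (-llr ρ ν x)) ∂ρ
      = ∫⁻ x, ENNReal.ofReal ((ν.rnDeriv ρ x).toReal) ∂ρ := by
    refine lintegral_congr_ae ?_
    filter_upwards [exp_neg_llr h] with x hx
    rw [hx]
  have h3 : ∫⁻ x, ENNReal.ofReal ((ν.rnDeriv ρ x).toReal) ∂ρ ≤ ∫⁻ x, ν.rnDeriv ρ x ∂ρ :=
    lintegral_mono fun x => ENNReal.ofReal_toReal_le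
  have h4 : ∫⁻ x, ν.rnDeriv ρ x ∂ρ ≤ ν Set.univ := Measure.lintegral_rnDeriv_le
  have h5 : ENNReal.ofReal (Real.exp (∫ x, -llr ρ ν x ∂ρ)) ≤ 1 := by
    refine (h1.trans ?_)
    rw [h2]
    exact h3.trans (h4.trans_eq (by simp))
  rw [integral_neg] at h5
  have h6 : Real.exp (-∫ x, llr ρ ν x ∂ρ) ≤ 1 := by
    by_contra hcon
    push_neg at hcon
    exact absurd h5 (by simpa using (not_le.mpr (ENNReal.one_lt_ofReal.mpr hcon)))
  have := Real.exp_le_one_iff.mp h6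
  linarith

lemma donsker_varadhan_bound {α : Type*} [MeasurableSpace α] {ρ μ : Measure α}
    [IsProbabilityMeasure ρ] [IsProbabilityMeasure μ] {f : α → ℝ}
    (hρμ : ρ ≪ μ) (hfρ : Integrable f ρ) (hfμ : Integrable (fun x => Real.exp (f x)) μ)
    (hllr : Integrable (llr ρ μ) ρ) :
    ∫ x, f x ∂ρ ≤ ∫ x, llr ρ μ x ∂ρ + Real.log (∫ x, Real.exp (f x) ∂μ) := by
  have hν : IsProbabilityMeasure (μ.tilted f) := isProbabilityMeasure_tilted hfμ
  have hρν : ρ ≪ μ.tilted f := hρμ.trans (absolutelyContinuous_tilted hfμ)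
  have hint : Integrable (llr ρ (μ.tilted f)) ρ := integrable_llr_tilted_right hρμ hfρ hllr hfμ
  have h0 : 0 ≤ ∫ x, llr ρ (μ.tilted f) x ∂ρ := integral_llr_nonneg' hρν hint
  rw [integral_llr_tilted_right hρμ hfρ hfμ hllr] at h0
  linarith

lemma isProbabilityMeasure_bind' {A W : Type*} [MeasurableSpace A] [MeasurableSpace W]
    {P : Measure A} [IsProbabilityMeasure P] {g : A → Measure W} (hg : Measurable g)
    (h : ∀ a, IsProbabilityMeasure (g a)) : IsProbabilityMeasure (P.bind g) := by
  constructor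
  rw [Measure.bind_apply MeasurableSet.univ hg.aemeasurable]
  simp [fun a => (h a).measure_univ]

lemma bind_integral_eq {A W : Type*} [MeasurableSpace A] [MeasurableSpace W]
    {P : Measure A} [IsProbabilityMeasure P] {g : A → Measure W} (hg : Measurable g)
    {h : W → ℝ} (hh : Measurable h) (hh0 : ∀ w, 0 ≤ h w)
    (hae : ∀ᵐ a ∂P, Integrable h (g a))
    (hint : Integrable (fun a => ∫ w, h w ∂(g a)) P) :
    Integrable h (P.bind g) ∧ ∫ w, h w ∂(P.bind g) = ∫ a, ∫ w, h w ∂(g a) ∂P := by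
  have hl : ∫⁻ w, ENNReal.ofReal (h w) ∂(P.bind g)
      = ∫⁻ a, ∫⁻ w, ENNReal.ofReal (h w) ∂(g a) ∂P :=
    Measure.lintegral_bind hg.aemeasurable (ENNReal.measurable_ofReal.comp hh).aemeasurable
  have hae' : ∀ᵐ a ∂P, ∫⁻ w, ENNReal.ofReal (h w) ∂(g a) = ENNReal.ofReal (∫ w, h w ∂(g a)) := by
    filter_upwards [hae] with a ha
    rw [ofReal_integral_eq_lintegral_ofReal ha (Filter.Eventually.of_forall hh0)]
  have h2 : ∫⁻ a, ∫⁻ w, ENNReal.ofReal (h w) ∂(g a) ∂P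
      = ENNReal.ofReal (∫ a, ∫ w, h w ∂(g a) ∂P) := by
    rw [lintegral_congr_ae hae',
      ofReal_integral_eq_lintegral_ofReal hint
        (Filter.Eventually.of_forall fun a => integral_nonneg hh0)]
  have hfin : ∫⁻ w, ENNReal.ofReal (h w) ∂(P.bind g) ≠ ⊤ := by
    rw [hl, h2]; exact ENNReal.ofReal_ne_top
  have hIntb : Integrable h (P.bind g) := by
    refine ⟨hh.aestronglyMeasurable, ?_⟩
    rw [hasFiniteIntegral_iff_ofReal (Filter.Eventually.of_forall hh0)]
    exact lt_top_iff_ne_top.2 hfin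
  refine ⟨hIntb, ?_⟩
  have heq := ofReal_integral_eq_lintegral_ofReal hIntb (Filter.Eventually.of_forall hh0)
  rw [hl, h2] at heq
  exact (ENNReal.ofReal_eq_ofReal_iff (integral_nonneg hh0)
    (integral_nonneg fun a => integral_nonneg hh0)).mp heq

/-- Corollary 5.1: the forgetting Lagrangian is a PAC-Bayesian upper bound on the
average test loss of the unlearned model.

The joint draw of `(D, D_e)` is modelled by `PJ`, the law of `(D, ι)` where
`D ~ P_Z^{⊗n}` and the index map `ι` of the size-`m` sub-tuple `D_e = subTuple D ι` is
uniform over strictly monotone maps `Fin m → Fin n`; `D_r = remainingTuple D ι` is the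
remaining `(n−m)`-tuple.  `PWD` is the learning algorithm, a Markov kernel defined on
data sets of any size (so that it can be applied both to `D` and to `D_r`), `P̃` an
arbitrary reference noise Markov kernel, and the data-dependent prior is
`Q(D,D_e)(B) = ∫ P̃(w_l)(B) (PWD D_r)(dw_l)`, i.e. `(PWD ⟨n−m, D_r⟩).bind P̃`.
`κ` is the scrubbing Markov kernel mapping `(w_l, D_e)` to the unlearned model, and the
marginal unlearned distribution is `ρ̄(D,D_e,κ) = (PWD ⟨n, D⟩).bind (κ (·, D_e))`.
With `L w = ∫ ℓ(w,z) dP_Z`, `L̂(w|D_r) = (1/(n−m)) ∑_{z ∈ D_r} ℓ(w,z)`,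
`KL(ρ‖μ) = ∫ llr ρ μ dρ`, and
`ξ_FL = ∫∫ exp (β (L w − L̂(w|D_r))) Q(D,D_e)(dw) dP_{D,D_e}` assumed finite (encoded by
`hξ`): with probability at least `1 − δ` over `(D, D_e)`, simultaneously for every
scrubbing kernel `κ` with `ρ̄ ≪ Q(D,D_e)`, finite `KL(ρ̄‖Q(D,D_e))` and the relevant
integrability, the average test loss of the unlearned model is bounded by the average
(over learned models) forgetting Lagrangian plus `β⁻¹ log (ξ_FL/δ)`. -/
theorem forgetting_lagrangian_pac_bayes
    {Z W : Type*} [MeasurableSpace Z] [MeasurableSpace W]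
    (PZ : Measure Z) [IsProbabilityMeasure PZ]
    (n m : ℕ) (hm : 1 ≤ m) (hmn : m < n)
    (ℓ : W → Z → ℝ)
    (hℓ : Measurable (fun q : W × Z => ℓ q.1 q.2))
    (hℓ0 : ∀ w z, 0 ≤ ℓ w z)
    (PWD : ProbabilityTheory.Kernel ((k : ℕ) × (Fin k → Z)) W)
    [ProbabilityTheory.IsMarkovKernel PWD]
    (Ptilde : ProbabilityTheory.Kernel W W)
    [ProbabilityTheory.IsMarkovKernel Ptilde]
    (PJ : Measure ((Fin n → Z) × {f : Fin m → Fin n // StrictMono f}))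
    (hPJ : PJ = (Measure.pi fun _ : Fin n => PZ).prod
      (uniformOn (Set.univ : Set {f : Fin m → Fin n // StrictMono f})))
    (β : ℝ) (hβ : 0 < β)
    (ξ : ℝ)
    (hξ : ENNReal.ofReal ξ =
      ∫⁻ q, ∫⁻ w, ENNReal.ofReal (Real.exp (β *
          ((∫ z, ℓ w z ∂PZ)
            - ((n - m : ℕ) : ℝ)⁻¹ * ∑ j, ℓ w (remainingTuple q.1 q.2 j))))
        ∂((PWD ⟨n - m, remainingTuple q.1 q.2⟩).bind (fun wl => Ptilde wl)) ∂PJ)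
    (δ : ℝ) (hδ0 : 0 < δ) (hδ1 : δ < 1) :
    ENNReal.ofReal (1 - δ) ≤
      PJ {q | ∀ κ : ProbabilityTheory.Kernel (W × (Fin m → Z)) W,
        ProbabilityTheory.IsMarkovKernel κ →
        -- absolute continuity of the marginal unlearned distribution w.r.t. the prior
        ((PWD ⟨n, q.1⟩).bind (fun wl => κ (wl, subTuple q.1 q.2)) ≪
          (PWD ⟨n - m, remainingTuple q.1 q.2⟩).bind (fun wl => Ptilde wl)) →
        -- finiteness of KL(ρ̄ ‖ Q(D,D_e))
        Integrable
          (llr ((PWD ⟨n, q.1⟩).bind (fun wl => κ (wl, subTuple q.1 q.2)))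
            ((PWD ⟨n - m, remainingTuple q.1 q.2⟩).bind (fun wl => Ptilde wl)))
          ((PWD ⟨n, q.1⟩).bind (fun wl => κ (wl, subTuple q.1 q.2))) →
        -- relevant integrability of the population and empirical losses
        (∀ᵐ wl ∂(PWD ⟨n, q.1⟩),
          Integrable (fun w => ∫ z, ℓ w z ∂PZ) (κ (wl, subTuple q.1 q.2)) ∧
          Integrable
            (fun w => ((n - m : ℕ) : ℝ)⁻¹ * ∑ j, ℓ w (remainingTuple q.1 q.2 j))
            (κ (wl, subTuple q.1 q.2))) →
        Integrable
          (fun wl => ∫ w, (∫ z, ℓ w z ∂PZ) ∂(κ (wl, subTuple q.1 q.2)))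
          (PWD ⟨n, q.1⟩) →
        Integrable
          (fun wl => ∫ w, ((n - m : ℕ) : ℝ)⁻¹ *
              ∑ j, ℓ w (remainingTuple q.1 q.2 j) ∂(κ (wl, subTuple q.1 q.2)))
          (PWD ⟨n, q.1⟩) →
        -- the PAC-Bayesian bound: average test loss ≤ average forgetting Lagrangian
        -- (training loss on D_r plus β⁻¹ KL(ρ̄‖Q)) plus β⁻¹ log (ξ_FL/δ)
        ∫ wl, (∫ w, (∫ z, ℓ w z ∂PZ) ∂(κ (wl, subTuple q.1 q.2))) ∂(PWD ⟨n, q.1⟩) ≤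
          (∫ wl, (∫ w, ((n - m : ℕ) : ℝ)⁻¹ *
              ∑ j, ℓ w (remainingTuple q.1 q.2 j) ∂(κ (wl, subTuple q.1 q.2)))
            ∂(PWD ⟨n, q.1⟩))
          + β⁻¹ *
            (∫ w, llr ((PWD ⟨n, q.1⟩).bind (fun wl => κ (wl, subTuple q.1 q.2)))
                ((PWD ⟨n - m, remainingTuple q.1 q.2⟩).bind (fun wl => Ptilde wl)) w
              ∂((PWD ⟨n, q.1⟩).bind (fun wl => κ (wl, subTuple q.1 q.2))))
          + β⁻¹ * Real.log (ξ / δ)} := by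
  classical
  -- probability space instances
  have hSne : Nonempty {f : Fin m → Fin n // StrictMono f} :=
    ⟨⟨Fin.castLE hmn.le, Fin.strictMono_castLE hmn.le⟩⟩
  haveI : IsProbabilityMeasure (uniformOn (Set.univ : Set {f : Fin m → Fin n // StrictMono f})) :=
    uniformOn_isProbabilityMeasure Set.finite_univ Set.univ_nonempty
  haveI hPJprob : IsProbabilityMeasure PJ := by rw [hPJ]; infer_instance
  have hc0 : (0:ℝ) ≤ ((n - m : ℕ) : ℝ)⁻¹ := by positivity
  -- measurability of the remaining-tuple map
  have hR : Measurable (fun q : (Fin n → Z) × {f : Fin m → Fin n // StrictMono f} =>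
      remainingTuple q.1 q.2) := by
    refine measurable_from_prod_countable_left fun ι => ?_
    unfold remainingTuple
    exact measurable_pi_lambda _ fun j => measurable_pi_apply
      (((Finset.univ.image ι.1)ᶜ).orderEmbOfFin (by
        simp [Finset.card_compl, Finset.card_image_of_injective _ ι.2.injective]) j)
  have hemb : Measurable (fun q : (Fin n → Z) × {f : Fin m → Fin n // StrictMono f} =>
      (⟨n - m, remainingTuple q.1 q.2⟩ : (k : ℕ) × (Fin k → Z))) :=
    (measurable_sigmaMk' _).comp hR
  -- measurability of the population loss
  have hL : Measurable (fun w : W => ∫ z, ℓ w z ∂PZ) := by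
    have := (hℓ.stronglyMeasurable.integral_prod_right' (ν := PZ)).measurable
    exact this
  -- the kernel q ↦ Q(D,D_e)
  set K2 : ProbabilityTheory.Kernel ((Fin n → Z) × {f : Fin m → Fin n // StrictMono f}) W :=
    (Ptilde.comp PWD).comap _ hemb with hK2def
  have hK2 : ∀ q : (Fin n → Z) × {f : Fin m → Fin n // StrictMono f},
      K2 q = (PWD ⟨n - m, remainingTuple q.1 q.2⟩).bind (fun wl => Ptilde wl) := fun q => by
    rw [hK2def, Kernel.comap_apply, Kernel.comp_apply]
  -- the exponential-moment function F
  set F : (Fin n → Z) × {f : Fin m → Fin n // StrictMono f} → ℝ≥0∞ := fun q =>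
    ∫⁻ w, ENNReal.ofReal (Real.exp (β *
        ((∫ z, ℓ w z ∂PZ)
          - ((n - m : ℕ) : ℝ)⁻¹ * ∑ j, ℓ w (remainingTuple q.1 q.2 j))))
      ∂((PWD ⟨n - m, remainingTuple q.1 q.2⟩).bind (fun wl => Ptilde wl)) with hFdef
  have hξ' : ENNReal.ofReal ξ = ∫⁻ q, F q ∂PJ := hξ
  have hsum : Measurable (fun p : ((Fin n → Z) × {f : Fin m → Fin n // StrictMono f}) × W =>
      ((n - m : ℕ) : ℝ)⁻¹ * ∑ j, ℓ p.2 (remainingTuple p.1.1 p.1.2 j)) := by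
    refine (Finset.measurable_sum Finset.univ fun j _ => ?_).const_mul _
    exact hℓ.comp (measurable_snd.prodMk
      ((measurable_pi_apply j).comp (hR.comp measurable_fst)))
  have hG : Measurable (fun p : ((Fin n → Z) × {f : Fin m → Fin n // StrictMono f}) × W =>
      ENNReal.ofReal (Real.exp (β * ((∫ z, ℓ p.2 z ∂PZ)
        - ((n - m : ℕ) : ℝ)⁻¹ * ∑ j, ℓ p.2 (remainingTuple p.1.1 p.1.2 j))))) :=
    ENNReal.measurable_ofReal.comp (Real.measurable_exp.comp
      (((hL.comp measurable_snd).sub hsum).const_mul β))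
  have hFmeas : Measurable F := by
    have hFeq : F = fun q => ∫⁻ w,
        (fun p : ((Fin n → Z) × {f : Fin m → Fin n // StrictMono f}) × W =>
          ENNReal.ofReal (Real.exp (β * ((∫ z, ℓ p.2 z ∂PZ)
            - ((n - m : ℕ) : ℝ)⁻¹ * ∑ j, ℓ p.2 (remainingTuple p.1.1 p.1.2 j))))) (q, w)
        ∂(K2 q) := by
      funext q
      rw [hK2 q]
    rw [hFeq]
    exact hG.lintegral_kernel_prod_right'
  -- positivity and finiteness of the exponential moment
  have hFpos : ∀ q, 0 < F q := by
    intro q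
    haveI : IsProbabilityMeasure
        ((PWD ⟨n - m, remainingTuple q.1 q.2⟩).bind (fun wl => Ptilde wl)) :=
      isProbabilityMeasure_bind' (Kernel.measurable Ptilde) fun a => inferInstance
    have hGq : Measurable (fun w : W => ENNReal.ofReal (Real.exp (β *
        ((∫ z, ℓ w z ∂PZ)
          - ((n - m : ℕ) : ℝ)⁻¹ * ∑ j, ℓ w (remainingTuple q.1 q.2 j))))) :=
      ENNReal.measurable_ofReal.comp (Real.measurable_exp.comp
        ((hL.sub ((Finset.measurable_sum Finset.univ fun j _ =>
          hℓ.comp (measurable_id.prodMk measurable_const)).const_mul _)).const_mul β))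
    show 0 < ∫⁻ w, ENNReal.ofReal (Real.exp (β *
        ((∫ z, ℓ w z ∂PZ)
          - ((n - m : ℕ) : ℝ)⁻¹ * ∑ j, ℓ w (remainingTuple q.1 q.2 j))))
      ∂((PWD ⟨n - m, remainingTuple q.1 q.2⟩).bind (fun wl => Ptilde wl))
    rw [lintegral_pos_iff_support hGq]
    have hsupp : Function.support (fun w : W => ENNReal.ofReal (Real.exp (β *
        ((∫ z, ℓ w z ∂PZ)
          - ((n - m : ℕ) : ℝ)⁻¹ * ∑ j, ℓ w (remainingTuple q.1 q.2 j))))) = Set.univ :=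
      Set.eq_univ_of_forall fun w => (ENNReal.ofReal_pos.2 (Real.exp_pos _)).ne'
    rw [hsupp]
    simp
  have hξpos : 0 < ξ := by
    have h0 : 0 < ∫⁻ q, F q ∂PJ := by
      rw [lintegral_pos_iff_support hFmeas]
      have hsupp : Function.support F = Set.univ :=
        Set.eq_univ_of_forall fun q => (hFpos q).ne'
      rw [hsupp]
      simp
    rw [← hξ'] at h0
    exact ENNReal.ofReal_pos.mp h0
  have hξδpos : 0 < ξ / δ := div_pos hξpos hδ0
  set c : ℝ≥0∞ := ENNReal.ofReal (ξ / δ) with hc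
  have hcne0 : c ≠ 0 := (ENNReal.ofReal_pos.2 hξδpos).ne'
  have hE : MeasurableSet {q | F q ≤ c} := measurableSet_le hFmeas measurable_const
  -- Markov's inequality
  have hcompl : PJ {q | F q ≤ c}ᶜ ≤ ENNReal.ofReal δ := by
    have hsub : {q | F q ≤ c}ᶜ ⊆ {q | c ≤ F q} := by
      intro q hq
      simp only [Set.mem_compl_iff, Set.mem_setOf_eq, not_le] at hq
      exact hq.le
    refine (measure_mono hsub).trans ?_
    by_contra hcon
    push_neg at hcon
    have hmul := mul_meas_ge_le_lintegral₀ (μ := PJ) hFmeas.aemeasurable c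
    have hlt : ENNReal.ofReal ξ < c * PJ {q | c ≤ F q} := by
      have h1 : c * ENNReal.ofReal δ < c * PJ {q | c ≤ F q} :=
        ENNReal.mul_right_strictMono hcne0 ENNReal.ofReal_ne_top hcon
      rwa [hc, ← ENNReal.ofReal_mul hξδpos.le, div_mul_cancel₀ _ hδ0.ne'] at h1
    rw [hξ'] at hlt
    exact absurd hmul (not_le.mpr hlt)
  have hEbound : ENNReal.ofReal (1 - δ) ≤ PJ {q | F q ≤ c} := by
    have h2 : (1:ℝ≥0∞) - PJ {q | F q ≤ c} ≤ ENNReal.ofReal δ := by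
      rw [← prob_compl_eq_one_sub hE]
      exact hcompl
    have h3 : (1:ℝ≥0∞) ≤ ENNReal.ofReal δ + PJ {q | F q ≤ c} := by
      exact tsub_le_iff_right.mp h2
    calc ENNReal.ofReal (1 - δ) = 1 - ENNReal.ofReal δ := by
          rw [← ENNReal.ofReal_one, ← ENNReal.ofReal_sub _ hδ0.le]
      _ ≤ PJ {q | F q ≤ c} := tsub_le_iff_left.mpr h3
  -- the good event implies the bound, simultaneously for all κ
  refine hEbound.trans (measure_mono ?_)
  intro q hq
  simp only [Set.mem_setOf_eq] at hq ⊢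
  intro κ hκM hAC hllrInt hae hI1 hI2
  haveI := hκM
  haveI hPprob : IsProbabilityMeasure (PWD ⟨n, q.1⟩) := inferInstance
  have hgκ : Measurable (fun wl : W => κ (wl, subTuple q.1 q.2)) :=
    κ.measurable.comp (measurable_id.prodMk measurable_const)
  have hgP : Measurable (fun wl : W => Ptilde wl) := Ptilde.measurable
  set ρb : Measure W := (PWD ⟨n, q.1⟩).bind (fun wl => κ (wl, subTuple q.1 q.2)) with hρb
  set μb : Measure W :=
    (PWD ⟨n - m, remainingTuple q.1 q.2⟩).bind (fun wl => Ptilde wl) with hμb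
  haveI hρprob : IsProbabilityMeasure ρb :=
    isProbabilityMeasure_bind' hgκ fun a => inferInstance
  haveI hμprob : IsProbabilityMeasure μb :=
    isProbabilityMeasure_bind' hgP fun a => inferInstance
  have hLhm : Measurable (fun w : W =>
      ((n - m : ℕ) : ℝ)⁻¹ * ∑ j, ℓ w (remainingTuple q.1 q.2 j)) :=
    (Finset.measurable_sum Finset.univ fun j _ =>
      hℓ.comp (measurable_id.prodMk measurable_const)).const_mul _
  have hL0 : ∀ w, 0 ≤ ∫ z, ℓ w z ∂PZ := fun w => integral_nonneg fun z => hℓ0 w z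
  have hLh0 : ∀ w, 0 ≤ ((n - m : ℕ) : ℝ)⁻¹ * ∑ j, ℓ w (remainingTuple q.1 q.2 j) :=
    fun w => mul_nonneg hc0 (Finset.sum_nonneg fun j _ => hℓ0 _ _)
  have haeL : ∀ᵐ wl ∂(PWD ⟨n, q.1⟩),
      Integrable (fun w => ∫ z, ℓ w z ∂PZ) (κ (wl, subTuple q.1 q.2)) := by
    filter_upwards [hae] with wl hwl using hwl.1
  have haeLh : ∀ᵐ wl ∂(PWD ⟨n, q.1⟩),
      Integrable (fun w => ((n - m : ℕ) : ℝ)⁻¹ * ∑ j, ℓ w (remainingTuple q.1 q.2 j))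
        (κ (wl, subTuple q.1 q.2)) := by
    filter_upwards [hae] with wl hwl using hwl.2
  have hbindL := bind_integral_eq hgκ hL hL0 haeL hI1
  have hbindLh := bind_integral_eq hgκ hLhm hLh0 haeLh hI2
  have hEqL : ∫ w, (∫ z, ℓ w z ∂PZ) ∂ρb
      = ∫ wl, (∫ w, (∫ z, ℓ w z ∂PZ) ∂(κ (wl, subTuple q.1 q.2))) ∂(PWD ⟨n, q.1⟩) :=
    hbindL.2
  have hEqLh : ∫ w, (((n - m : ℕ) : ℝ)⁻¹ * ∑ j, ℓ w (remainingTuple q.1 q.2 j)) ∂ρb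
      = ∫ wl, (∫ w, ((n - m : ℕ) : ℝ)⁻¹ *
          ∑ j, ℓ w (remainingTuple q.1 q.2 j) ∂(κ (wl, subTuple q.1 q.2)))
        ∂(PWD ⟨n, q.1⟩) :=
    hbindLh.2
  -- the function f and its properties
  set f : W → ℝ := fun w => β * ((∫ z, ℓ w z ∂PZ)
      - ((n - m : ℕ) : ℝ)⁻¹ * ∑ j, ℓ w (remainingTuple q.1 q.2 j)) with hfdef
  have hfmeas : Measurable f := (hL.sub hLhm).const_mul β
  have hfρ : Integrable f ρb := ((hbindL.1.sub hbindLh.1).const_mul β)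
  have hFq : (∫⁻ w, ENNReal.ofReal (Real.exp (f w)) ∂μb) = F q := rfl
  have hexpμ : Integrable (fun w => Real.exp (f w)) μb := by
    refine ⟨(Real.measurable_exp.comp hfmeas).aestronglyMeasurable, ?_⟩
    rw [hasFiniteIntegral_iff_ofReal
      (Filter.Eventually.of_forall fun w => (Real.exp_pos _).le)]
    calc ∫⁻ w, ENNReal.ofReal (Real.exp (f w)) ∂μb = F q := hFq
      _ ≤ c := hq
      _ < ⊤ := ENNReal.ofReal_lt_top
  have hDV := donsker_varadhan_bound hAC hfρ hexpμ hllrInt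
  have h_exp_le : ∫ w, Real.exp (f w) ∂μb ≤ ξ / δ := by
    rw [integral_eq_lintegral_of_nonneg_ae
      (Filter.Eventually.of_forall fun w => (Real.exp_pos _).le)
      (Real.measurable_exp.comp hfmeas).aestronglyMeasurable]
    calc (∫⁻ w, ENNReal.ofReal (Real.exp (f w)) ∂μb).toReal
        ≤ c.toReal := ENNReal.toReal_mono ENNReal.ofReal_ne_top (hFq ▸ hq)
      _ = ξ / δ := ENNReal.toReal_ofReal hξδpos.le
  have hlog : Real.log (∫ w, Real.exp (f w) ∂μb) ≤ Real.log (ξ / δ) :=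
    Real.log_le_log (integral_exp_pos hexpμ) h_exp_le
  have hsplit : ∫ w, f w ∂ρb = β * ((∫ w, (∫ z, ℓ w z ∂PZ) ∂ρb)
      - ∫ w, (((n - m : ℕ) : ℝ)⁻¹ * ∑ j, ℓ w (remainingTuple q.1 q.2 j)) ∂ρb) := by
    rw [hfdef]
    rw [integral_const_mul]
    rw [integral_sub hbindL.1 hbindLh.1]
  have hcomb : β * ((∫ w, (∫ z, ℓ w z ∂PZ) ∂ρb)
      - ∫ w, (((n - m : ℕ) : ℝ)⁻¹ * ∑ j, ℓ w (remainingTuple q.1 q.2 j)) ∂ρb)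
      ≤ (∫ w, llr ρb μb w ∂ρb) + Real.log (ξ / δ) := by
    rw [← hsplit]
    exact hDV.trans (by linarith)
  have hβinv : (∫ w, (∫ z, ℓ w z ∂PZ) ∂ρb)
      - ∫ w, (((n - m : ℕ) : ℝ)⁻¹ * ∑ j, ℓ w (remainingTuple q.1 q.2 j)) ∂ρb
      ≤ β⁻¹ * ((∫ w, llr ρb μb w ∂ρb) + Real.log (ξ / δ)) := by
    have h := mul_le_mul_of_nonneg_left hcomb (inv_nonneg.2 hβ.le)
    rwa [← mul_assoc, inv_mul_cancel₀ hβ.ne', one_mul] at h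
  rw [← hEqL, ← hEqLh]
  linarith
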